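/- arXiv:1406.7033 — 2 statements merged into one kernel-verified Lean document; each statement's English description precedes it below -/
import Mathlib

section
/- Let f be a positive solution of the endangered species equation ∂f/∂t = Δf + f^p on ℝⁿ × (0,∞) with p > 1, and set u = log f. Then |∇u|² satisfies the evolution equation ∂/∂t(|∇u|²) = Δ(|∇u|²) − 2|∇∇u|² + 2⟨∇(|∇u|²), ∇u⟩ + 2(p−1)e^{(p-1)u}|∇u|², where |∇∇u|² is the squared Frobenius norm of the spatial Hessian of u. -/
/-- Partial derivative of `g` in the `i`-th coordinate direction. -/
noncomputable def pd {n : ℕ} (i : Fin n) (g : (Fin n → ℝ) → ℝ) (x : Fin n → ℝ) : ℝ :=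
  fderiv ℝ g x (Pi.single i 1)

/-- Spatial Laplacian: sum of second partial derivatives. -/
noncomputable def lap {n : ℕ} (g : (Fin n → ℝ) → ℝ) (x : Fin n → ℝ) : ℝ :=
  ∑ i, pd i (pd i g) x

/-- Squared norm of the spatial gradient. -/
noncomputable def gradSq {n : ℕ} (g : (Fin n → ℝ) → ℝ) (x : Fin n → ℝ) : ℝ :=
  ∑ i, (pd i g x) ^ 2

/-- Squared Frobenius norm of the spatial Hessian. -/
noncomputable def hessSq {n : ℕ} (g : (Fin n → ℝ) → ℝ) (x : Fin n → ℝ) : ℝ :=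
  ∑ i, ∑ j, (pd j (pd i g) x) ^ 2

open Real Filter

namespace ESE

/-- Directional derivative in the joint space-time variable. -/
noncomputable def DD {n : ℕ} (v : (Fin n → ℝ) × ℝ) (V : (Fin n → ℝ) × ℝ → ℝ)
    (q : (Fin n → ℝ) × ℝ) : ℝ := fderiv ℝ V q v

def Om (n : ℕ) : Set ((Fin n → ℝ) × ℝ) := {q | 0 < q.2}

/-- `i`-th spatial coordinate direction in the joint variable. -/
def ev {n : ℕ} (i : Fin n) : (Fin n → ℝ) × ℝ := (Pi.single i 1, 0)

/-- time direction in the joint variable. -/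
def tv (n : ℕ) : (Fin n → ℝ) × ℝ := (0, 1)

variable {n : ℕ}

lemma isOpen_Om : IsOpen (Om n) := isOpen_lt continuous_const continuous_snd

lemma mem_Om {x : Fin n → ℝ} {t : ℝ} (ht : 0 < t) : (x, t) ∈ Om n := ht

lemma smooth_dd {V : (Fin n → ℝ) × ℝ → ℝ} (hV : ContDiffOn ℝ (⊤ : ℕ∞) V (Om n))
    (v : (Fin n → ℝ) × ℝ) : ContDiffOn ℝ (⊤ : ℕ∞) (DD v V) (Om n) :=
  (hV.fderiv_of_isOpen isOpen_Om (by simp)).clm_apply contDiffOn_const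

lemma diffAt {F : Type*} [NormedAddCommGroup F] [NormedSpace ℝ F]
    {V : (Fin n → ℝ) × ℝ → F} {q} (hV : ContDiffOn ℝ (⊤ : ℕ∞) V (Om n))
    (hq : q ∈ Om n) : DifferentiableAt ℝ V q :=
  (hV.contDiffAt (isOpen_Om.mem_nhds hq)).differentiableAt (by simp)

lemma pd_slice {V : (Fin n → ℝ) × ℝ → ℝ} {x : Fin n → ℝ} {t : ℝ}
    (hV : DifferentiableAt ℝ V (x, t)) (i : Fin n) :
    pd i (fun y => V (y, t)) x = DD (ev i) V (x, t) := by
  have h : HasFDerivAt (fun y : Fin n → ℝ => V (y, t))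
      ((fderiv ℝ V (x, t)).comp (ContinuousLinearMap.inl ℝ (Fin n → ℝ) ℝ)) x :=
    hV.hasFDerivAt.comp x (hasFDerivAt_prodMk_left x t)
  rw [pd, h.fderiv]; rfl

lemma deriv_slice {V : (Fin n → ℝ) × ℝ → ℝ} {x : Fin n → ℝ} {t : ℝ}
    (hV : DifferentiableAt ℝ V (x, t)) :
    deriv (fun s => V (x, s)) t = DD (tv n) V (x, t) := by
  have h1 : HasDerivAt (fun s : ℝ => ((x, s) : (Fin n → ℝ) × ℝ)) (tv n) t :=
    (hasDerivAt_const t x).prodMk (hasDerivAt_id t)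
  have h : HasDerivAt (fun s => V (x, s)) (fderiv ℝ V (x, t) (tv n)) t :=
    hV.hasFDerivAt.comp_hasDerivAt t h1
  exact h.deriv

lemma dd_symm {V : (Fin n → ℝ) × ℝ → ℝ} {q} (hV : ContDiffOn ℝ (⊤ : ℕ∞) V (Om n))
    (hq : q ∈ Om n) (v w : (Fin n → ℝ) × ℝ) :
    DD v (DD w V) q = DD w (DD v V) q := by
  have hd : DifferentiableAt ℝ (fderiv ℝ V) q :=
    diffAt (hV.fderiv_of_isOpen isOpen_Om (by simp)) hq
  have key : ∀ a b : (Fin n → ℝ) × ℝ, DD a (DD b V) q = fderiv ℝ (fderiv ℝ V) q a b := by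
    intro a b
    have h : HasFDerivAt (fun p => fderiv ℝ V p b)
        ((ContinuousLinearMap.apply ℝ ℝ b).comp (fderiv ℝ (fderiv ℝ V) q)) q :=
      ((ContinuousLinearMap.apply ℝ ℝ b).hasFDerivAt).comp q hd.hasFDerivAt
    show fderiv ℝ (fun p => fderiv ℝ V p b) q a = _
    rw [h.fderiv]; rfl
  rw [key, key]
  exact (hV.contDiffAt (isOpen_Om.mem_nhds hq)).isSymmSndFDerivAt (by rw [minSmoothness_of_isRCLikeNormedField]; exact WithTop.coe_le_coe.mpr (le_top : (2 : ℕ∞) ≤ ⊤)) v w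

lemma eventuallyEq_of_Om {A B : (Fin n → ℝ) × ℝ → ℝ} {q} (hq : q ∈ Om n)
    (h : ∀ r ∈ Om n, A r = B r) : A =ᶠ[nhds q] B := by
  filter_upwards [isOpen_Om.mem_nhds hq] with r hr using h r hr

lemma dd_congr {V W : (Fin n → ℝ) × ℝ → ℝ} {q} (h : V =ᶠ[nhds q] W) (v : (Fin n → ℝ) × ℝ) :
    DD v V q = DD v W q := by
  unfold DD; rw [h.fderiv_eq]

lemma dd_sum {ι : Type*} (s : Finset ι) (g : ι → (Fin n → ℝ) × ℝ → ℝ) {q}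
    (h : ∀ i ∈ s, DifferentiableAt ℝ (g i) q) (v : (Fin n → ℝ) × ℝ) :
    DD v (fun q => ∑ i ∈ s, g i q) q = ∑ i ∈ s, DD v (g i) q := by
  unfold DD; rw [fderiv_fun_sum h]; simp

lemma dd_add {A B : (Fin n → ℝ) × ℝ → ℝ} {q} (hA : DifferentiableAt ℝ A q)
    (hB : DifferentiableAt ℝ B q) (v : (Fin n → ℝ) × ℝ) :
    DD v (fun q => A q + B q) q = DD v A q + DD v B q := by
  unfold DD; rw [fderiv_fun_add hA hB]; simp

lemma dd_mul {A B : (Fin n → ℝ) × ℝ → ℝ} {q} (hA : DifferentiableAt ℝ A q)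
    (hB : DifferentiableAt ℝ B q) (v : (Fin n → ℝ) × ℝ) :
    DD v (fun q => A q * B q) q = DD v A q * B q + A q * DD v B q := by
  unfold DD
  rw [fderiv_fun_mul hA hB]
  simp [mul_comm]
  ring

lemma dd_sq {A : (Fin n → ℝ) × ℝ → ℝ} {q} (hA : DifferentiableAt ℝ A q)
    (v : (Fin n → ℝ) × ℝ) :
    DD v (fun q => (A q) ^ 2) q = 2 * A q * DD v A q := by
  have := dd_mul hA hA v
  have h2 : (fun q => A q * A q) = fun q => (A q) ^ 2 := by funext q; ring
  rw [h2] at this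
  rw [this]; ring

lemma dd_exp {A : (Fin n → ℝ) × ℝ → ℝ} {q} (hA : DifferentiableAt ℝ A q)
    (v : (Fin n → ℝ) × ℝ) :
    DD v (fun q => Real.exp (A q)) q = Real.exp (A q) * DD v A q := by
  unfold DD
  rw [(hA.hasFDerivAt.exp).fderiv]
  simp

lemma dd_const_mul {A : (Fin n → ℝ) × ℝ → ℝ} {q} (hA : DifferentiableAt ℝ A q) (c : ℝ)
    (v : (Fin n → ℝ) × ℝ) :
    DD v (fun q => c * A q) q = c * DD v A q := by
  unfold DD
  rw [fderiv_const_mul hA c]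
  simp

/-! ### Derived facts -/

/-- joint gradSq -/
noncomputable def GG {n : ℕ} (U : (Fin n → ℝ) × ℝ → ℝ) (q : (Fin n → ℝ) × ℝ) : ℝ :=
  ∑ i, (DD (ev i) U q) ^ 2

variable {U V : (Fin n → ℝ) × ℝ → ℝ}

lemma smooth_sq {A : (Fin n → ℝ) × ℝ → ℝ} (hA : ContDiffOn ℝ (⊤ : ℕ∞) A (Om n)) :
    ContDiffOn ℝ (⊤ : ℕ∞) (fun q => (A q) ^ 2) (Om n) := by
  have h2 : (fun q => (A q) ^ 2) = fun q => A q * A q := by funext q; ring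
  rw [h2]; exact hA.mul hA

lemma smooth_GG (hU : ContDiffOn ℝ (⊤ : ℕ∞) U (Om n)) : ContDiffOn ℝ (⊤ : ℕ∞) (GG U) (Om n) :=
  ContDiffOn.sum fun i _ => smooth_sq (smooth_dd hU (ev i))

lemma gradSq_slice (hU : ContDiffOn ℝ (⊤ : ℕ∞) U (Om n)) {y : Fin n → ℝ} {s : ℝ} (hs : 0 < s) :
    gradSq (fun z => U (z, s)) y = GG U (y, s) := by
  unfold gradSq GG
  refine Finset.sum_congr rfl fun i _ => ?_
  rw [pd_slice (diffAt hU (mem_Om hs)) i]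

lemma dd_GG (hU : ContDiffOn ℝ (⊤ : ℕ∞) U (Om n)) {q} (hq : q ∈ Om n) (v : (Fin n → ℝ) × ℝ) :
    DD v (GG U) q = ∑ i, 2 * DD (ev i) U q * DD v (DD (ev i) U) q := by
  unfold GG
  rw [dd_sum Finset.univ _ (fun i _ => diffAt (smooth_sq (smooth_dd hU (ev i))) hq) v]
  exact Finset.sum_congr rfl fun i _ => dd_sq (diffAt (smooth_dd hU (ev i)) hq) v

lemma pd_pd_slice (hV : ContDiffOn ℝ (⊤ : ℕ∞) V (Om n)) {x : Fin n → ℝ} {t : ℝ} (ht : 0 < t)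
    (i j : Fin n) :
    pd j (pd i (fun y => V (y, t))) x = DD (ev j) (DD (ev i) V) (x, t) := by
  have h1 : pd i (fun y => V (y, t)) = fun y => DD (ev i) V (y, t) :=
    funext fun y => pd_slice (diffAt hV (mem_Om ht)) i
  rw [h1, pd_slice (diffAt (smooth_dd hV (ev i)) (mem_Om ht)) j]

lemma lap_slice (hV : ContDiffOn ℝ (⊤ : ℕ∞) V (Om n)) {x : Fin n → ℝ} {t : ℝ} (ht : 0 < t) :
    lap (fun y => V (y, t)) x = ∑ i, DD (ev i) (DD (ev i) V) (x, t) :=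
  Finset.sum_congr rfl fun i _ => pd_pd_slice hV ht i i

lemma hessSq_slice (hV : ContDiffOn ℝ (⊤ : ℕ∞) V (Om n)) {x : Fin n → ℝ} {t : ℝ} (ht : 0 < t) :
    hessSq (fun y => V (y, t)) x = ∑ i, ∑ j, (DD (ev j) (DD (ev i) V) (x, t)) ^ 2 := by
  unfold hessSq
  exact Finset.sum_congr rfl fun i _ => Finset.sum_congr rfl fun j _ => by
    rw [pd_pd_slice hV ht i j]

/-- third-derivative commutation -/
lemma comm3 (hU : ContDiffOn ℝ (⊤ : ℕ∞) U (Om n)) {q} (hq : q ∈ Om n) (i j : Fin n) :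
    DD (ev i) (DD (ev j) (DD (ev j) U)) q = DD (ev j) (DD (ev j) (DD (ev i) U)) q := by
  rw [dd_symm (smooth_dd hU (ev j)) hq (ev i) (ev j)]
  exact dd_congr (eventuallyEq_of_Om hq fun r hr => dd_symm hU hr (ev i) (ev j)) (ev j)


section PDE

variable {n : ℕ} {p : ℝ}

lemma pde_U (p : ℝ)
    (f : (Fin n → ℝ) → ℝ → ℝ)
    (hf_smooth : ContDiffOn ℝ (⊤ : ℕ∞) (fun q : (Fin n → ℝ) × ℝ => f q.1 q.2) (Om n))
    (hf_pos : ∀ x t, 0 < t → 0 < f x t)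
    (hf_pde : ∀ x t, 0 < t →
      deriv (fun s => f x s) t = lap (fun y => f y t) x + (f x t) ^ p)
    (u : (Fin n → ℝ) → ℝ → ℝ)
    (hu : ∀ x t, u x t = Real.log (f x t))
    (hU : ContDiffOn ℝ (⊤ : ℕ∞) (fun q : (Fin n → ℝ) × ℝ => u q.1 q.2) (Om n)) :
    ∀ q ∈ Om n, DD (tv n) (fun q : (Fin n → ℝ) × ℝ => u q.1 q.2) q
      = (∑ j, DD (ev j) (DD (ev j) (fun q : (Fin n → ℝ) × ℝ => u q.1 q.2)) q)
        + GG (fun q : (Fin n → ℝ) × ℝ => u q.1 q.2) q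
        + Real.exp ((p - 1) * u q.1 q.2) := by
  set F : (Fin n → ℝ) × ℝ → ℝ := fun q => f q.1 q.2 with hFdef
  set U : (Fin n → ℝ) × ℝ → ℝ := fun q => u q.1 q.2 with hUdef
  have hF : ContDiffOn ℝ (⊤ : ℕ∞) F (Om n) := hf_smooth
  have hFU : ∀ r ∈ Om n, F r = Real.exp (U r) := by
    rintro ⟨y, s⟩ hr
    show f y s = Real.exp (u y s)
    rw [hu, Real.exp_log (hf_pos y s hr)]
  have hdF : ∀ v : (Fin n → ℝ) × ℝ, ∀ r ∈ Om n, DD v F r = Real.exp (U r) * DD v U r := by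
    intro v r hr
    rw [dd_congr (eventuallyEq_of_Om hr hFU) v]
    exact dd_exp (diffAt hU hr) v
  rintro ⟨x, t⟩ hq
  have ht : 0 < t := hq
  -- joint PDE for F
  have hjoint : DD (tv n) F (x, t)
      = (∑ i, DD (ev i) (DD (ev i) F) (x, t)) + F (x, t) ^ p := by
    have h1 : deriv (fun s => F (x, s)) t = DD (tv n) F (x, t) :=
      deriv_slice (diffAt hF (mem_Om ht))
    have h2 : lap (fun y => F (y, t)) x = ∑ i, DD (ev i) (DD (ev i) F) (x, t) :=
      lap_slice hF ht
    rw [← h1, ← h2]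
    exact hf_pde x t ht
  -- expand second derivatives of F
  have hexp : ∀ i : Fin n, DD (ev i) (DD (ev i) F) (x, t)
      = Real.exp (U (x, t)) * ((DD (ev i) U (x, t)) ^ 2 + DD (ev i) (DD (ev i) U) (x, t)) := by
    intro i
    have he : DD (ev i) F =ᶠ[nhds ((x, t) : (Fin n → ℝ) × ℝ)]
        fun r => Real.exp (U r) * DD (ev i) U r :=
      eventuallyEq_of_Om hq (hdF (ev i))
    rw [dd_congr he (ev i),
      dd_mul ((diffAt hU hq).exp) (diffAt (smooth_dd hU (ev i)) hq) (ev i),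
      dd_exp (diffAt hU hq) (ev i)]
    ring
  have hFp : F (x, t) ^ p = Real.exp (U (x, t)) * Real.exp ((p - 1) * U (x, t)) := by
    have h0 : (0 : ℝ) < F (x, t) := hf_pos x t ht
    rw [Real.rpow_def_of_pos h0, ← Real.exp_add]
    have : Real.log (F (x, t)) = U (x, t) := (hu x t).symm
    rw [this]
    congr 1
    ring
  have hmain : Real.exp (U (x, t)) * DD (tv n) U (x, t)
      = Real.exp (U (x, t)) *
        ((∑ j, DD (ev j) (DD (ev j) U) (x, t)) + GG U (x, t)
          + Real.exp ((p - 1) * U (x, t))) := by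
    rw [← hdF (tv n) (x, t) hq, hjoint, hFp,
      Finset.sum_congr rfl fun i _ => hexp i, ← Finset.mul_sum, Finset.sum_add_distrib]
    unfold GG
    ring
  have := mul_left_cancel₀ (Real.exp_ne_zero (U (x, t))) hmain
  exact this

end PDE


end ESE

open ESE


lemma alg {n : ℕ} (a : Fin n → ℝ) (S T : Fin n → Fin n → ℝ) (e c : ℝ) :
    ∑ i, 2 * a i * ((∑ j, T i j) + (∑ k, 2 * a k * S k i) + e * (c * a i))
      = (∑ j, ∑ i, (2 * S i j * S i j + 2 * a i * T i j))
        - 2 * (∑ i, ∑ j, (S i j) ^ 2)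
        + 2 * (∑ i, (∑ k, 2 * a k * S k i) * a i)
        + 2 * c * e * (∑ i, (a i) ^ 2) := by
  rw [show (∑ j, ∑ i, (2 * S i j * S i j + 2 * a i * T i j))
      = ∑ i, ∑ j, (2 * S i j * S i j + 2 * a i * T i j) from Finset.sum_comm]
  have key : ∀ i : Fin n,
      2 * a i * ((∑ j, T i j) + (∑ k, 2 * a k * S k i) + e * (c * a i))
        = (∑ j, (2 * S i j * S i j + 2 * a i * T i j))
          - 2 * (∑ j, (S i j) ^ 2)
          + 2 * ((∑ k, 2 * a k * S k i) * a i)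
          + 2 * c * e * (a i) ^ 2 := by
    intro i
    have h1 : ∑ j, (2 * S i j * S i j + 2 * a i * T i j)
        = 2 * (∑ j, (S i j) ^ 2) + 2 * a i * (∑ j, T i j) := by
      rw [Finset.sum_add_distrib]
      congr 1
      · rw [Finset.mul_sum]; exact Finset.sum_congr rfl fun j _ => by ring
      · rw [Finset.mul_sum]
    rw [h1]; ring
  calc ∑ i, 2 * a i * ((∑ j, T i j) + (∑ k, 2 * a k * S k i) + e * (c * a i))
      = ∑ i, ((∑ j, (2 * S i j * S i j + 2 * a i * T i j))
          - 2 * (∑ j, (S i j) ^ 2)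
          + 2 * ((∑ k, 2 * a k * S k i) * a i)
          + 2 * c * e * (a i) ^ 2) := Finset.sum_congr rfl fun i _ => key i
    _ = _ := by
        rw [Finset.sum_add_distrib, Finset.sum_add_distrib, Finset.sum_sub_distrib,
          ← Finset.mul_sum, ← Finset.mul_sum, ← Finset.mul_sum]


/-- evolution equation for `|∇u|²` where `u = log f` and `f > 0` solves
`∂f/∂t = Δf + f^p`:
`∂/∂t(|∇u|²) = Δ(|∇u|²) − 2|∇∇u|² + 2⟨∇(|∇u|²), ∇u⟩ + 2(p−1)e^{(p-1)u}|∇u|²`. -/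
theorem ese_gradSq_evolution (n : ℕ) (hn : 1 ≤ n) (p : ℝ) (hp : 1 < p)
    (f : (Fin n → ℝ) → ℝ → ℝ)
    (hf_smooth : ContDiffOn ℝ (⊤ : ℕ∞) (fun q : (Fin n → ℝ) × ℝ => f q.1 q.2) {q | 0 < q.2})
    (hf_pos : ∀ x t, 0 < t → 0 < f x t)
    (hf_pde : ∀ x t, 0 < t →
      deriv (fun s => f x s) t = lap (fun y => f y t) x + (f x t) ^ p)
    (u : (Fin n → ℝ) → ℝ → ℝ)
    (hu : ∀ x t, u x t = Real.log (f x t)) :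
    ∀ x t, 0 < t →
      deriv (fun s => gradSq (fun y => u y s) x) t =
        lap (fun y => gradSq (fun z => u z t) y) x
          - 2 * hessSq (fun y => u y t) x
          + 2 * ∑ i, pd i (fun y => gradSq (fun z => u z t) y) x * pd i (fun y => u y t) x
          + 2 * (p - 1) * Real.exp ((p - 1) * u x t) * gradSq (fun y => u y t) x := by

  intro x t ht
  have hQ : ((x, t) : (Fin n → ℝ) × ℝ) ∈ Om n := ht
  set U : (Fin n → ℝ) × ℝ → ℝ := fun q => u q.1 q.2 with hUdef
  have hU : ContDiffOn ℝ (⊤ : ℕ∞) U (Om n) := by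
    have h1 : U = fun q : (Fin n → ℝ) × ℝ => Real.log (f q.1 q.2) :=
      funext fun q => hu q.1 q.2
    rw [h1]
    exact hf_smooth.log fun q hq => (hf_pos q.1 q.2 hq).ne'
  -- abbreviations
  set a : Fin n → ℝ := fun i => DD (ev i) U (x, t) with ha
  set S : Fin n → Fin n → ℝ := fun i j => DD (ev j) (DD (ev i) U) (x, t) with hS
  set T : Fin n → Fin n → ℝ := fun i j => DD (ev j) (DD (ev j) (DD (ev i) U)) (x, t) with hT
  set ee : ℝ := Real.exp ((p - 1) * u x t) with hee
  -- the PDE for U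
  have hpde : ∀ q ∈ Om n, DD (tv n) U q
      = (∑ j, DD (ev j) (DD (ev j) U) q) + GG U q + Real.exp ((p - 1) * U q) :=
    pde_U p f hf_smooth hf_pos hf_pde u hu hU
  -- expansion of spatial derivatives of the time derivative
  have hDtU : ∀ i : Fin n, DD (ev i) (DD (tv n) U) (x, t)
      = (∑ j, T i j) + (∑ k, 2 * a k * S k i) + ee * ((p - 1) * a i) := by
    intro i
    have hA : DifferentiableAt ℝ (fun r => ∑ j, DD (ev j) (DD (ev j) U) r) (x, t) :=
      diffAt (ContDiffOn.sum fun j _ => smooth_dd (smooth_dd hU (ev j)) (ev j)) hQ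
    have hB : DifferentiableAt ℝ (GG U) (x, t) := diffAt (smooth_GG hU) hQ
    have hC : DifferentiableAt ℝ (fun r => Real.exp ((p - 1) * U r)) (x, t) :=
      ((diffAt hU hQ).const_mul (p - 1)).exp
    have e0 : DD (ev i) (DD (tv n) U) (x, t)
        = DD (ev i) (fun r => (∑ j, DD (ev j) (DD (ev j) U) r) + GG U r
            + Real.exp ((p - 1) * U r)) (x, t) :=
      dd_congr (eventuallyEq_of_Om hQ hpde) (ev i)
    have e1 : DD (ev i) (fun r => (∑ j, DD (ev j) (DD (ev j) U) r) + GG U r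
          + Real.exp ((p - 1) * U r)) (x, t)
        = DD (ev i) (fun r => (∑ j, DD (ev j) (DD (ev j) U) r) + GG U r) (x, t)
          + DD (ev i) (fun r => Real.exp ((p - 1) * U r)) (x, t) :=
      dd_add (hA.add hB) hC (ev i)
    have e2 : DD (ev i) (fun r => (∑ j, DD (ev j) (DD (ev j) U) r) + GG U r) (x, t)
        = DD (ev i) (fun r => ∑ j, DD (ev j) (DD (ev j) U) r) (x, t)
          + DD (ev i) (GG U) (x, t) :=
      dd_add hA hB (ev i)
    have e3 : DD (ev i) (fun r => ∑ j, DD (ev j) (DD (ev j) U) r) (x, t) = ∑ j, T i j := by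
      have := dd_sum Finset.univ (fun j => DD (ev j) (DD (ev j) U))
        (fun j _ => diffAt (smooth_dd (smooth_dd hU (ev j)) (ev j)) hQ) (ev i)
      exact this.trans (Finset.sum_congr rfl fun j _ => comm3 hU hQ i j)
    have e4 : DD (ev i) (GG U) (x, t) = ∑ k, 2 * a k * S k i := dd_GG hU hQ (ev i)
    have e5 : DD (ev i) (fun r => Real.exp ((p - 1) * U r)) (x, t) = ee * ((p - 1) * a i) := by
      rw [dd_exp ((diffAt hU hQ).const_mul (p - 1)) (ev i),
        dd_const_mul (diffAt hU hQ) (p - 1) (ev i)]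
    rw [e0, e1, e2, e3, e4, e5]
  -- LHS
  have hLHS : deriv (fun s => gradSq (fun y => u y s) x) t
      = ∑ i, 2 * a i * ((∑ j, T i j) + (∑ k, 2 * a k * S k i) + ee * ((p - 1) * a i)) := by
    have h1 : (fun s => gradSq (fun y => u y s) x) =ᶠ[nhds t] fun s => GG U (x, s) := by
      filter_upwards [lt_mem_nhds ht] with s hs
      exact gradSq_slice hU hs
    rw [h1.deriv_eq, deriv_slice (diffAt (smooth_GG hU) hQ), dd_GG hU hQ (tv n)]
    refine Finset.sum_congr rfl fun i _ => ?_
    rw [dd_symm hU hQ (tv n) (ev i), hDtU i]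
  -- the spatial slice of gradSq
  have hgfun : (fun y => gradSq (fun z => u z t) y) = fun y => GG U (y, t) :=
    funext fun y => gradSq_slice hU ht
  -- Laplacian term
  have hlap : lap (fun y => gradSq (fun z => u z t) y) x
      = ∑ j, ∑ i, (2 * S i j * S i j + 2 * a i * T i j) := by
    rw [hgfun, lap_slice (smooth_GG hU) ht]
    refine Finset.sum_congr rfl fun j _ => ?_
    have he : DD (ev j) (GG U) =ᶠ[nhds ((x, t) : (Fin n → ℝ) × ℝ)]
        fun r => ∑ i, 2 * DD (ev i) U r * DD (ev j) (DD (ev i) U) r :=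
      eventuallyEq_of_Om hQ fun r hr => dd_GG hU hr (ev j)
    rw [dd_congr he (ev j),
      dd_sum Finset.univ (fun i r => 2 * DD (ev i) U r * DD (ev j) (DD (ev i) U) r)
        (fun i _ => (((diffAt (smooth_dd hU (ev i)) hQ).const_mul 2).mul
          (diffAt (smooth_dd (smooth_dd hU (ev i)) (ev j)) hQ))) (ev j)]
    refine Finset.sum_congr rfl fun i _ => ?_
    have hm := dd_mul (A := fun r => 2 * DD (ev i) U r) (B := DD (ev j) (DD (ev i) U))
      ((diffAt (smooth_dd hU (ev i)) hQ).const_mul 2)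
      (diffAt (smooth_dd (smooth_dd hU (ev i)) (ev j)) hQ) (ev j)
    rw [hm, dd_const_mul (diffAt (smooth_dd hU (ev i)) hQ) 2 (ev j)]
  -- Hessian term
  have hhess : hessSq (fun y => u y t) x = ∑ i, ∑ j, (S i j) ^ 2 := hessSq_slice hU ht
  -- mixed term
  have hmix : ∀ i : Fin n, pd i (fun y => gradSq (fun z => u z t) y) x
      = ∑ k, 2 * a k * S k i := by
    intro i
    rw [hgfun, pd_slice (diffAt (smooth_GG hU) hQ) i]
    exact dd_GG hU hQ (ev i)
  have hpd : ∀ i : Fin n, pd i (fun y => u y t) x = a i := fun i =>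
    pd_slice (diffAt hU hQ) i
  have hgrad : gradSq (fun y => u y t) x = ∑ i, (a i) ^ 2 := gradSq_slice hU ht
  have hmix2 : ∑ i, pd i (fun y => gradSq (fun z => u z t) y) x * pd i (fun y => u y t) x
      = ∑ i, (∑ k, 2 * a k * S k i) * a i :=
    Finset.sum_congr rfl fun i _ => by rw [hmix i, hpd i]
  rw [hLHS, hlap, hhess, hgrad, hmix2]
  exact alg a S T ee (p - 1)
end

section
/- Let f be a positive solution of the endangered species equation ∂f/∂t = Δf + f^p on ℝⁿ × (0,∞) with p > 1, set u = log f, and let α, β, c, a be real constants with α ≥ 2β > 0, 0 < c ≤ α, and 0 < a ≤ nα. Suppose the differential Harnack inequality αΔu + β|∇u|² + c·e^{(p-1)u} + a/t ≥ 0 holds on ℝⁿ × (0,∞). Then for every point (x,t) ∈ ℝⁿ × (0,∞) and every vector v ∈ ℝⁿ, one has ∂u/∂t + ⟨∇u, v⟩ ≥ −|v|²/2 − n/t. -/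
/-- if `f > 0` solves `∂f/∂t = Δf + f^p`, `u = log f`, the constants
satisfy `α ≥ 2β > 0`, `0 < c ≤ α`, `0 < a ≤ nα`, and the differential Harnack
inequality `αΔu + β|∇u|² + c e^{(p-1)u} + a/t ≥ 0` holds on `ℝⁿ × (0,∞)`, then for
every `(x,t)` and every `v ∈ ℝⁿ`: `∂u/∂t + ⟨∇u, v⟩ ≥ −|v|²/2 − n/t`. -/
theorem ese_harnack_path_inequality (n : ℕ) (hn : 1 ≤ n) (p : ℝ) (hp : 1 < p)
    (f : (Fin n → ℝ) → ℝ → ℝ)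
    (hf_smooth : ContDiffOn ℝ (⊤ : ℕ∞) (fun q : (Fin n → ℝ) × ℝ => f q.1 q.2) {q | 0 < q.2})
    (hf_pos : ∀ x t, 0 < t → 0 < f x t)
    (hf_pde : ∀ x t, 0 < t →
      deriv (fun s => f x s) t = lap (fun y => f y t) x + (f x t) ^ p)
    (u : (Fin n → ℝ) → ℝ → ℝ)
    (hu : ∀ x t, u x t = Real.log (f x t))
    (α β c a : ℝ)
    (hα2β : α ≥ 2 * β) (hβ : 0 < β)
    (hc_pos : 0 < c) (hcα : c ≤ α)
    (ha_pos : 0 < a) (ha : a ≤ (n : ℝ) * α)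
    (hharnack : ∀ x t, 0 < t →
      α * lap (fun y => u y t) x + β * gradSq (fun y => u y t) x
        + c * Real.exp ((p - 1) * u x t) + a / t ≥ 0) :
    ∀ (x : Fin n → ℝ) (t : ℝ), 0 < t → ∀ v : Fin n → ℝ,
      deriv (fun s => u x s) t + ∑ i, pd i (fun y => u y t) x * v i ≥
        -(∑ i, (v i) ^ 2) / 2 - (n : ℝ) / t := by
  intro x t ht v
  set F : (Fin n → ℝ) → ℝ := fun y => f y t with hFdef
  have hFpos : ∀ y, 0 < F y := fun y => hf_pos y t ht
  have hF : ContDiff ℝ (⊤ : ℕ∞) F := by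
    rw [← contDiffOn_univ]
    exact hf_smooth.comp ((contDiff_id.prodMk contDiff_const).contDiffOn)
      (fun y _ => ht)
  have hFdiff : Differentiable ℝ F := hF.differentiable (by simp)
  have hpdF : ∀ i : Fin n, ContDiff ℝ (⊤ : ℕ∞) (pd i F) := by
    intro i
    exact (hF.fderiv_right (by simp)).clm_apply contDiff_const
  -- u at time t equals log ∘ F
  have hulog : (fun y => u y t) = fun y => Real.log (F y) := funext fun y => hu y t
  -- first spatial derivatives of u
  have hA : ∀ (i : Fin n) (y : Fin n → ℝ),
      pd i (fun z => Real.log (F z)) y = pd i F y * (F y)⁻¹ := by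
    intro i y
    unfold pd
    rw [fderiv.log (hFdiff y) (hFpos y).ne']
    simp [mul_comm]
  -- second spatial derivatives of u
  have hB : ∀ i : Fin n,
      pd i (pd i (fun z => Real.log (F z))) x =
        pd i (pd i F) x * (F x)⁻¹ + pd i F x * (-((F x) ^ 2)⁻¹ * pd i F x) := by
    intro i
    have heq : pd i (fun z => Real.log (F z)) = fun y => pd i F y * (F y)⁻¹ :=
      funext (hA i)
    rw [heq]
    have h1 : HasFDerivAt (pd i F) (fderiv ℝ (pd i F) x) x :=
      ((hpdF i).differentiable (by simp) x).hasFDerivAt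
    have h2 : HasFDerivAt (fun y => (F y)⁻¹)
        ((-((F x) ^ 2)⁻¹) • fderiv ℝ F x) x :=
      (hasDerivAt_inv (hFpos x).ne').comp_hasFDerivAt x (hFdiff x).hasFDerivAt
    have h3 : HasFDerivAt (fun y => pd i F y * (F y)⁻¹)
        (pd i F x • -(F x ^ 2)⁻¹ • fderiv ℝ F x + (F x)⁻¹ • fderiv ℝ (pd i F) x) x :=
      h1.mul h2
    rw [show pd i (fun y => pd i F y * (F y)⁻¹) x
        = (fderiv ℝ (fun y => pd i F y * (F y)⁻¹) x) (Pi.single i 1) from rfl,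
      h3.fderiv]
    simp only [ContinuousLinearMap.add_apply, ContinuousLinearMap.smul_apply,
      smul_eq_mul, pd]
    ring
  -- time derivative of u
  have hft : DifferentiableAt ℝ (fun s => f x s) t := by
    have h0 : ContDiffAt ℝ (⊤ : ℕ∞) (fun q : (Fin n → ℝ) × ℝ => f q.1 q.2) (x, t) :=
      hf_smooth.contDiffAt ((isOpen_lt continuous_const continuous_snd).mem_nhds ht)
    have h1 : ContDiffAt ℝ (⊤ : ℕ∞) (fun s : ℝ => f x s) t :=
      h0.comp t (contDiffAt_const.prodMk contDiffAt_id)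
    exact h1.differentiableAt (by simp)
  have huts : (fun s => u x s) = fun s => Real.log (f x s) := funext fun s => hu x s
  have hUT : deriv (fun s => u x s) t = deriv (fun s => f x s) t / f x t := by
    rw [huts]
    exact deriv.log hft (hf_pos x t ht).ne'
  -- abbreviations
  set P := F x with hP
  have hPpos : 0 < P := hFpos x
  set LU := lap (fun y => u y t) x with hLU
  set GU := gradSq (fun y => u y t) x with hGU
  set E := Real.exp ((p - 1) * u x t) with hE
  set W := ∑ i, pd i (fun y => u y t) x * v i with hW
  set V := ∑ i, (v i) ^ 2 with hV
  -- key identity: LU = lap F x / P - gradSq F x / P^2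
  have hLUe : LU = lap F x * P⁻¹ - gradSq F x * (P ^ 2)⁻¹ := by
    rw [hLU, hulog]
    unfold lap gradSq
    rw [Finset.sum_mul, Finset.sum_mul, ← Finset.sum_sub_distrib]
    refine Finset.sum_congr rfl fun i _ => ?_
    rw [hB i]
    ring
  have hGUe : GU = gradSq F x * (P ^ 2)⁻¹ := by
    rw [hGU, hulog]
    unfold gradSq
    rw [Finset.sum_mul]
    refine Finset.sum_congr rfl fun i _ => ?_
    rw [hA i]
    ring
  -- E = P^(p-1) = P^p / P
  have hEe : E = P ^ p / P := by
    rw [hE, hu x t]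
    have : Real.exp ((p - 1) * Real.log (f x t)) = (f x t) ^ (p - 1) := by
      rw [Real.rpow_def_of_pos (hf_pos x t ht), mul_comm]
    rw [this]
    rw [Real.rpow_sub (hf_pos x t ht), Real.rpow_one]
  -- PDE in u form
  have hK1 : deriv (fun s => u x s) t = LU + GU + E := by
    rw [hUT, hf_pde x t ht, hLUe, hGUe, hEe]
    have hPne : P ≠ 0 := hPpos.ne'
    have : lap (fun y => f y t) x = lap F x := rfl
    rw [this, show f x t = P from rfl]
    field_simp
    ring
  -- Harnack at (x,t)
  have hK2 : α * LU + β * GU + c * E + a / t ≥ 0 := hharnack x t ht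
  have hK3 : 0 ≤ GU := by
    rw [hGU]; exact Finset.sum_nonneg fun i _ => sq_nonneg _
  have hK4 : 0 < E := Real.exp_pos _
  have hK5 : 0 ≤ GU + 2 * W + V := by
    have h0 : 0 ≤ ∑ i, (pd i (fun y => u y t) x + v i) ^ 2 :=
      Finset.sum_nonneg fun i _ => sq_nonneg _
    have h1 : ∑ i, (pd i (fun y => u y t) x + v i) ^ 2 = GU + 2 * W + V := by
      rw [hGU, hW, hV]
      unfold gradSq
      rw [Finset.mul_sum, ← Finset.sum_add_distrib, ← Finset.sum_add_distrib]
      refine Finset.sum_congr rfl fun i _ => ?_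
      ring
    linarith [h1 ▸ h0]
  have hαpos : 0 < α := by linarith
  rw [hK1]
  have htinv : 0 < t⁻¹ := inv_pos.mpr ht
  have hat : a / t ≤ α * ((n : ℝ) / t) := by
    rw [mul_div_assoc']
    apply div_le_div_of_nonneg_right (by linarith) ht.le
  nlinarith [hK2, hαpos, hat,
    mul_nonneg (by linarith : (0:ℝ) ≤ α / 2 - β) hK3,
    mul_nonneg (by linarith : (0:ℝ) ≤ α - c) hK4.le,
    mul_nonneg (by linarith : (0:ℝ) ≤ α / 2) hK5]
end
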